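/- Let n ≥ 1, χ = 8(n+2), E₁ ∈ M_{n+1}(ℂ) the matrix with entry 1 in position (1,2), entry −1 in position (2,1), and all other entries 0, and e = χ^{−1/2}[[E₁, 0],[0, E₁]] ∈ m. Then the centralizer of e in m is one-dimensional: {X ∈ m : X e = e X} = ℝ·e. Moreover the centralizer of e in h, h_∥ = {Y ∈ h : Y e = e Y}, has real dimension 2(n−1)² + n + 2. -/

import Mathlib

open Matrix Complex

noncomputable section

/-- the index set {1,…,n+1} split as 1 + (1 + (n−1)) -/
abbrev Pn (n : ℕ) := Fin 1 ⊕ (Fin 1 ⊕ Fin (n - 1))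

/-- entrywise complex conjugation of a matrix -/
def mconj {k l : Type*} (M : Matrix k l ℂ) : Matrix k l ℂ := M.map (starRingEnd ℂ)

/-- the standard symplectic structure matrix J = [[0, I_{n+1}],[−I_{n+1}, 0]] -/
def Jsp (n : ℕ) : Matrix (Pn n ⊕ Pn n) (Pn n ⊕ Pn n) ℂ := fromBlocks 0 1 (-1) 0

/-- I_{n,1} = diag(1, −Iₙ) -/
def In1 (n : ℕ) : Matrix (Pn n) (Pn n) ℂ := fromBlocks 1 0 0 (-1)

/-- S = diag(I_{n,1}, I_{n,1}) -/
def Ssp (n : ℕ) : Matrix (Pn n ⊕ Pn n) (Pn n ⊕ Pn n) ℂ :=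
  fromBlocks (In1 n) 0 0 (In1 n)

/-- E₁ : entry 1 in position (1,2), entry −1 in position (2,1), zero elsewhere -/
def E1sp (n : ℕ) : Matrix (Pn n) (Pn n) ℂ :=
  fromBlocks 0 (of fun _ j => Sum.elim (fun _ => (1 : ℂ)) (fun _ => 0) j)
               (of fun i _ => Sum.elim (fun _ => (-1 : ℂ)) (fun _ => 0) i) 0

/-- e = χ^{−1/2} [[E₁, 0],[0, E₁]], χ = 8(n+2) -/
def esp (n : ℕ) : Matrix (Pn n ⊕ Pn n) (Pn n ⊕ Pn n) ℂ :=
  ((Real.sqrt (8 * ((n : ℝ) + 2)) : ℂ))⁻¹ • fromBlocks (E1sp n) 0 0 (E1sp n)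

/-- A = [[0, a, 𝐚],[a, 0, 0],[−𝐚̄ᵀ, 0, 0]] -/
def Asp (n : ℕ) (a : ℂ) (av : Fin (n - 1) → ℂ) : Matrix (Pn n) (Pn n) ℂ :=
  fromBlocks 0 (of fun _ j => Sum.elim (fun _ => a) av j)
               (of fun i _ => Sum.elim (fun _ => a) (fun k => -star (av k)) i) 0

/-- B = [[0, b, 𝐛],[b, 0, 0],[𝐛ᵀ, 0, 0]] -/
def Bsp (n : ℕ) (b : ℂ) (bv : Fin (n - 1) → ℂ) : Matrix (Pn n) (Pn n) ℂ :=
  fromBlocks 0 (of fun _ j => Sum.elim (fun _ => b) bv j)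
               (of fun i _ => Sum.elim (fun _ => b) bv i) 0

/-- μ((a,b),(𝐚,𝐛)) = [[A, B],[−B̄, Ā]] ∈ m_⊥ -/
def musp (n : ℕ) (a b : ℂ) (av bv : Fin (n - 1) → ℂ) :
    Matrix (Pn n ⊕ Pn n) (Pn n ⊕ Pn n) ℂ :=
  fromBlocks (Asp n a av) (Bsp n b bv) (-(mconj (Bsp n b bv))) (mconj (Asp n a av))

/-- C = [[c, 0, 0],[0, −c, 𝐜],[0, −𝐜̄ᵀ, 0]] -/
def Csp (n : ℕ) (c : ℂ) (cv : Fin (n - 1) → ℂ) : Matrix (Pn n) (Pn n) ℂ :=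
  fromBlocks (of fun _ _ => c) 0 0
    (fromBlocks (of fun _ _ => -c) (of fun _ j => cv j) (of fun i _ => -star (cv i)) 0)

/-- D = [[d, 0, 0],[0, −d, 𝐝],[0, 𝐝ᵀ, 0]] -/
def Dspm (n : ℕ) (d : ℂ) (dv : Fin (n - 1) → ℂ) : Matrix (Pn n) (Pn n) ℂ :=
  fromBlocks (of fun _ _ => d) 0 0
    (fromBlocks (of fun _ _ => -d) (of fun _ j => dv j) (of fun i _ => dv i) 0)

/-- η((c,d),(𝐜,𝐝)) = [[C, D],[−D̄, C̄]] ∈ h_⊥ -/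
def etasp (n : ℕ) (c d : ℂ) (cv dv : Fin (n - 1) → ℂ) :
    Matrix (Pn n ⊕ Pn n) (Pn n ⊕ Pn n) ℂ :=
  fromBlocks (Csp n c cv) (Dspm n d dv) (-(mconj (Dspm n d dv))) (mconj (Csp n c cv))

/-- membership in m = {X ∈ sp(n+1) : SXS = −X} -/
def inMsp (n : ℕ) (X : Matrix (Pn n ⊕ Pn n) (Pn n ⊕ Pn n) ℂ) : Prop :=
  X * Jsp n + Jsp n * Xᵀ = 0 ∧ Xᵀ = -(mconj X) ∧ Ssp n * X * Ssp n = -X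

/-- membership in h = {X ∈ sp(n+1) : SXS = X} -/
def inHsp (n : ℕ) (X : Matrix (Pn n ⊕ Pn n) (Pn n ⊕ Pn n) ℂ) : Prop :=
  X * Jsp n + Jsp n * Xᵀ = 0 ∧ Xᵀ = -(mconj X) ∧ Ssp n * X * Ssp n = X

namespace Sp
variable {n : ℕ}

/-! ### basic conjugation lemmas -/
lemma mconj_mul {k l m : Type*} [Fintype l] (M : Matrix k l ℂ) (N : Matrix l m ℂ) :
    mconj (M * N) = mconj M * mconj N := Matrix.map_mul
@[simp] lemma mconj_mconj {k l : Type*} (M : Matrix k l ℂ) : mconj (mconj M) = M := by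
  ext i j; simp [mconj]
lemma mconj_transpose {k l : Type*} (M : Matrix k l ℂ) : mconj Mᵀ = (mconj M)ᵀ := by
  ext i j; simp [mconj]
lemma mconj_add {k l : Type*} (M N : Matrix k l ℂ) : mconj (M + N) = mconj M + mconj N := by
  ext i j; simp [mconj]
lemma mconj_neg {k l : Type*} (M : Matrix k l ℂ) : mconj (-M) = -(mconj M) := by
  ext i j; simp [mconj]
lemma mconj_rsmul {k l : Type*} (r : ℝ) (M : Matrix k l ℂ) :
    mconj (r • M) = r • mconj M := by ext i j; simp [mconj]
lemma mconj_csmul {k l : Type*} (z : ℂ) (M : Matrix k l ℂ) :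
    mconj (z • M) = (starRingEnd ℂ z) • mconj M := by ext i j; simp [mconj]
@[simp] lemma mconj_zero {k l : Type*} : mconj (0 : Matrix k l ℂ) = 0 := by
  ext i j; simp [mconj]
lemma mconj_fromBlocks {k l k' l' : Type*} (A : Matrix k l ℂ) (B : Matrix k l' ℂ)
    (C : Matrix k' l ℂ) (D : Matrix k' l' ℂ) :
    mconj (fromBlocks A B C D) = fromBlocks (mconj A) (mconj B) (mconj C) (mconj D) :=
  Matrix.fromBlocks_map _ _ _ _ _

/-! ### entries of E1 -/
@[simp] lemma E1_ll (a b : Fin 1) : E1sp n (Sum.inl a) (Sum.inl b) = 0 := rfl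
@[simp] lemma E1_l1 (a b : Fin 1) : E1sp n (Sum.inl a) (Sum.inr (Sum.inl b)) = 1 := rfl
@[simp] lemma E1_lk (a : Fin 1) (k : Fin (n-1)) :
    E1sp n (Sum.inl a) (Sum.inr (Sum.inr k)) = 0 := rfl
@[simp] lemma E1_1l (a b : Fin 1) : E1sp n (Sum.inr (Sum.inl a)) (Sum.inl b) = -1 := rfl
@[simp] lemma E1_kl (k : Fin (n-1)) (b : Fin 1) :
    E1sp n (Sum.inr (Sum.inr k)) (Sum.inl b) = 0 := rfl
@[simp] lemma E1_rr (x y : Fin 1 ⊕ Fin (n-1)) : E1sp n (Sum.inr x) (Sum.inr y) = 0 := by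
  cases x <;> cases y <;> rfl

lemma E1_transpose : (E1sp n)ᵀ = -E1sp n := by
  ext i j
  rcases i with a | (b | k) <;> rcases j with a' | (b' | k') <;> simp
lemma mconj_E1 : mconj (E1sp n) = E1sp n := by
  ext i j
  rcases i with a | (b | k) <;> rcases j with a' | (b' | k') <;> simp [mconj]
lemma mconj_In1 : mconj (In1 n) = In1 n := by
  ext i j
  rcases i with a | x <;> rcases j with a' | y <;>
    simp [mconj, In1, fromBlocks, one_apply, apply_ite (starRingEnd ℂ)]
lemma In1_E1_In1 : In1 n * E1sp n * In1 n = -(E1sp n) := by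
  rw [In1, E1sp, fromBlocks_multiply, fromBlocks_multiply]
  ext i j
  rcases i with a | x <;> rcases j with a' | y <;> simp [fromBlocks]

/-! ### multiplication by E1 -/
lemma mulE1_c0 (M : Matrix (Pn n) (Pn n) ℂ) (i) (b : Fin 1) :
    (M * E1sp n) i (Sum.inl b) = -(M i (Sum.inr (Sum.inl 0))) := by
  simp [mul_apply, Fintype.sum_sum_type]
lemma mulE1_c1 (M : Matrix (Pn n) (Pn n) ℂ) (i) (b : Fin 1) :
    (M * E1sp n) i (Sum.inr (Sum.inl b)) = M i (Sum.inl 0) := by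
  simp [mul_apply, Fintype.sum_sum_type]
lemma mulE1_ck (M : Matrix (Pn n) (Pn n) ℂ) (i) (k : Fin (n-1)) :
    (M * E1sp n) i (Sum.inr (Sum.inr k)) = 0 := by
  simp [mul_apply, Fintype.sum_sum_type]
lemma E1mul_r0 (M : Matrix (Pn n) (Pn n) ℂ) (a : Fin 1) (j) :
    (E1sp n * M) (Sum.inl a) j = M (Sum.inr (Sum.inl 0)) j := by
  simp [mul_apply, Fintype.sum_sum_type]
lemma E1mul_r1 (M : Matrix (Pn n) (Pn n) ℂ) (a : Fin 1) (j) :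
    (E1sp n * M) (Sum.inr (Sum.inl a)) j = -(M (Sum.inl 0) j) := by
  simp [mul_apply, Fintype.sum_sum_type]
lemma E1mul_rk (M : Matrix (Pn n) (Pn n) ℂ) (k : Fin (n-1)) (j) :
    (E1sp n * M) (Sum.inr (Sum.inr k)) j = 0 := by
  simp [mul_apply, Fintype.sum_sum_type]

/-! ### J multiplication -/
lemma mulJ_l (X : Matrix (Pn n ⊕ Pn n) (Pn n ⊕ Pn n) ℂ) (i) (p : Pn n) :
    (X * Jsp n) i (Sum.inl p) = -(X i (Sum.inr p)) := by
  simp [mul_apply, Fintype.sum_sum_type, Jsp, fromBlocks, one_apply]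
lemma mulJ_r (X : Matrix (Pn n ⊕ Pn n) (Pn n ⊕ Pn n) ℂ) (i) (p : Pn n) :
    (X * Jsp n) i (Sum.inr p) = X i (Sum.inl p) := by
  simp [mul_apply, Fintype.sum_sum_type, Jsp, fromBlocks, one_apply]
lemma Jmul_l (X : Matrix (Pn n ⊕ Pn n) (Pn n ⊕ Pn n) ℂ) (p : Pn n) (j) :
    (Jsp n * X) (Sum.inl p) j = X (Sum.inr p) j := by
  simp [mul_apply, Fintype.sum_sum_type, Jsp, fromBlocks, one_apply]
lemma Jmul_r (X : Matrix (Pn n ⊕ Pn n) (Pn n ⊕ Pn n) ℂ) (p : Pn n) (j) :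
    (Jsp n * X) (Sum.inr p) j = -(X (Sum.inl p) j) := by
  simp [mul_apply, Fintype.sum_sum_type, Jsp, fromBlocks, one_apply]

/-! ### the sign structure of S -/
def sg : Pn n ⊕ Pn n → ℂ :=
  Sum.elim (Sum.elim (fun _ => 1) (fun _ => -1)) (Sum.elim (fun _ => 1) (fun _ => -1))
lemma Ssp_eq : Ssp n = diagonal sg := by
  ext i j
  rcases i with (a | x) | (a | x) <;> rcases j with (a' | y) | (a' | y) <;>
    simp [Ssp, In1, fromBlocks, sg, diagonal, one_apply, Sum.elim] <;>
    · rcases x with b | k <;> rcases y with b' | k' <;>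
        (simp [one_apply]; try (split_ifs <;> simp))
lemma SXS_apply (X : Matrix (Pn n ⊕ Pn n) (Pn n ⊕ Pn n) ℂ) (i j) :
    (Ssp n * X * Ssp n) i j = sg i * X i j * sg j := by
  rw [Ssp_eq, Matrix.mul_diagonal]
  rw [Matrix.diagonal_mul]
@[simp] lemma sg_ll (a : Fin 1) : sg (n := n) (Sum.inl (Sum.inl a)) = 1 := rfl
@[simp] lemma sg_l1 (a : Fin 1) : sg (n := n) (Sum.inl (Sum.inr (Sum.inl a))) = -1 := rfl
@[simp] lemma sg_lk (k : Fin (n-1)) : sg (n := n) (Sum.inl (Sum.inr (Sum.inr k))) = -1 := rfl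
@[simp] lemma sg_rl (a : Fin 1) : sg (n := n) (Sum.inr (Sum.inl a)) = 1 := rfl
@[simp] lemma sg_r1 (a : Fin 1) : sg (n := n) (Sum.inr (Sum.inr (Sum.inl a))) = -1 := rfl
@[simp] lemma sg_rk (k : Fin (n-1)) : sg (n := n) (Sum.inr (Sum.inr (Sum.inr k))) = -1 := rfl

lemma entry_zero_of_SXS_eq {X : Matrix (Pn n ⊕ Pn n) (Pn n ⊕ Pn n) ℂ}
    (hS : Ssp n * X * Ssp n = X) (i j) (hsg : sg i * sg j = -1) : X i j = 0 := by
  have h : sg i * X i j * sg j = X i j := by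
    rw [← SXS_apply, hS]
  have h2 : (-1 : ℂ) * X i j = X i j := by
    rw [← hsg]; linear_combination h
  linear_combination (-(1:ℂ)/2) * h2
lemma entry_zero_of_SXS_eq_neg {X : Matrix (Pn n ⊕ Pn n) (Pn n ⊕ Pn n) ℂ}
    (hS : Ssp n * X * Ssp n = -X) (i j) (hsg : sg i * sg j = 1) : X i j = 0 := by
  have h : sg i * X i j * sg j = -(X i j) := by
    rw [← SXS_apply, hS]; rfl
  have h2 : (1 : ℂ) * X i j = -(X i j) := by
    rw [← hsg]; linear_combination h
  linear_combination (1:ℂ)/2 * h2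

/-! ### F = √χ · e and multiplication by F -/
def Fsp (n : ℕ) : Matrix (Pn n ⊕ Pn n) (Pn n ⊕ Pn n) ℂ :=
  fromBlocks (E1sp n) 0 0 (E1sp n)
lemma esp_eq : esp n = ((Real.sqrt (8 * ((n : ℝ) + 2)) : ℂ))⁻¹ • Fsp n := rfl
lemma scoef_ne : ((Real.sqrt (8 * ((n : ℝ) + 2)) : ℂ))⁻¹ ≠ 0 := by
  have : (0:ℝ) < Real.sqrt (8 * ((n : ℝ) + 2)) := Real.sqrt_pos.2 (by positivity)
  exact inv_ne_zero (by exact_mod_cast this.ne')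
lemma comm_esp_iff (X : Matrix (Pn n ⊕ Pn n) (Pn n ⊕ Pn n) ℂ) :
    X * esp n = esp n * X ↔ X * Fsp n = Fsp n * X := by
  rw [esp_eq, Matrix.mul_smul, Matrix.smul_mul]
  constructor
  · intro h; exact smul_right_injective _ scoef_ne h
  · intro h; rw [h]

variable (X : Matrix (Pn n ⊕ Pn n) (Pn n ⊕ Pn n) ℂ)
lemma mulF_ll (i) (b : Fin 1) :
    (X * Fsp n) i (Sum.inl (Sum.inl b)) = -(X i (Sum.inl (Sum.inr (Sum.inl 0)))) := by
  simp [mul_apply, Fintype.sum_sum_type, Fsp, fromBlocks]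
lemma mulF_l1 (i) (b : Fin 1) :
    (X * Fsp n) i (Sum.inl (Sum.inr (Sum.inl b))) = X i (Sum.inl (Sum.inl 0)) := by
  simp [mul_apply, Fintype.sum_sum_type, Fsp, fromBlocks]
lemma mulF_lk (i) (k : Fin (n-1)) :
    (X * Fsp n) i (Sum.inl (Sum.inr (Sum.inr k))) = 0 := by
  simp [mul_apply, Fintype.sum_sum_type, Fsp, fromBlocks]
lemma mulF_rl (i) (b : Fin 1) :
    (X * Fsp n) i (Sum.inr (Sum.inl b)) = -(X i (Sum.inr (Sum.inr (Sum.inl 0)))) := by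
  simp [mul_apply, Fintype.sum_sum_type, Fsp, fromBlocks]
lemma mulF_r1 (i) (b : Fin 1) :
    (X * Fsp n) i (Sum.inr (Sum.inr (Sum.inl b))) = X i (Sum.inr (Sum.inl 0)) := by
  simp [mul_apply, Fintype.sum_sum_type, Fsp, fromBlocks]
lemma mulF_rk (i) (k : Fin (n-1)) :
    (X * Fsp n) i (Sum.inr (Sum.inr (Sum.inr k))) = 0 := by
  simp [mul_apply, Fintype.sum_sum_type, Fsp, fromBlocks]
lemma Fmul_ll (a : Fin 1) (j) :
    (Fsp n * X) (Sum.inl (Sum.inl a)) j = X (Sum.inl (Sum.inr (Sum.inl 0))) j := by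
  simp [mul_apply, Fintype.sum_sum_type, Fsp, fromBlocks]
lemma Fmul_l1 (a : Fin 1) (j) :
    (Fsp n * X) (Sum.inl (Sum.inr (Sum.inl a))) j = -(X (Sum.inl (Sum.inl 0)) j) := by
  simp [mul_apply, Fintype.sum_sum_type, Fsp, fromBlocks]
lemma Fmul_lk (k : Fin (n-1)) (j) :
    (Fsp n * X) (Sum.inl (Sum.inr (Sum.inr k))) j = 0 := by
  simp [mul_apply, Fintype.sum_sum_type, Fsp, fromBlocks]
lemma Fmul_rl (a : Fin 1) (j) :
    (Fsp n * X) (Sum.inr (Sum.inl a)) j = X (Sum.inr (Sum.inr (Sum.inl 0))) j := by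
  simp [mul_apply, Fintype.sum_sum_type, Fsp, fromBlocks]
lemma Fmul_r1 (a : Fin 1) (j) :
    (Fsp n * X) (Sum.inr (Sum.inr (Sum.inl a))) j = -(X (Sum.inr (Sum.inl 0)) j) := by
  simp [mul_apply, Fintype.sum_sum_type, Fsp, fromBlocks]
lemma Fmul_rk (k : Fin (n-1)) (j) :
    (Fsp n * X) (Sum.inr (Sum.inr (Sum.inr k))) j = 0 := by
  simp [mul_apply, Fintype.sum_sum_type, Fsp, fromBlocks]

/-! ### block-level membership criteria -/
lemma mem_h_of (A B : Matrix (Pn n) (Pn n) ℂ)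
    (hA : Aᵀ = -(mconj A)) (hB : Bᵀ = B)
    (hSA : In1 n * A * In1 n = A) (hSB : In1 n * B * In1 n = B)
    (hEA : A * E1sp n = E1sp n * A) (hEB : B * E1sp n = E1sp n * B) :
    inHsp n (fromBlocks A B (-(mconj B)) (mconj A)) ∧
      fromBlocks A B (-(mconj B)) (mconj A) * esp n
        = esp n * fromBlocks A B (-(mconj B)) (mconj A) := by
  have hmA : (mconj A)ᵀ = -A := by
    rw [← mconj_transpose, hA, mconj_neg, mconj_mconj]
  have hmB : (mconj B)ᵀ = mconj B := by rw [← mconj_transpose, hB]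
  have hSmA : In1 n * mconj A * In1 n = mconj A := by
    rw [← mconj_In1, ← mconj_mul, ← mconj_mul, hSA]
  have hSmB : In1 n * mconj B * In1 n = mconj B := by
    rw [← mconj_In1, ← mconj_mul, ← mconj_mul, hSB]
  have hEmA : mconj A * E1sp n = E1sp n * mconj A := by
    rw [← mconj_E1, ← mconj_mul, ← mconj_mul, hEA]
  have hEmB : mconj B * E1sp n = E1sp n * mconj B := by
    rw [← mconj_E1, ← mconj_mul, ← mconj_mul, hEB]
  set X := fromBlocks A B (-(mconj B)) (mconj A) with hX
  have hJ : X * Jsp n + Jsp n * Xᵀ = 0 := by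
    rw [hX, Jsp, fromBlocks_transpose, fromBlocks_multiply, fromBlocks_multiply,
      fromBlocks_add]
    simp only [Matrix.mul_zero, Matrix.mul_one, Matrix.zero_mul, Matrix.one_mul,
      Matrix.mul_neg, Matrix.neg_mul, zero_add, add_zero, neg_neg,
      transpose_neg, hA, hB, hmA, hmB]
    simp
  have hC : Xᵀ = -(mconj X) := by
    rw [hX, fromBlocks_transpose, mconj_fromBlocks, fromBlocks_neg]
    rw [hA, transpose_neg, ← mconj_transpose, hB, hmA, mconj_neg, mconj_mconj]
    simp
  have hS : Ssp n * X * Ssp n = X := by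
    rw [hX, Ssp, fromBlocks_multiply, fromBlocks_multiply]
    simp only [Matrix.mul_zero, Matrix.zero_mul, Matrix.mul_neg, Matrix.neg_mul,
      zero_add, add_zero, neg_zero, hSA, hSB, hSmA, hSmB]
  have hF : X * Fsp n = Fsp n * X := by
    rw [hX, Fsp, fromBlocks_multiply, fromBlocks_multiply]
    simp only [Matrix.mul_zero, Matrix.zero_mul, Matrix.mul_neg, Matrix.neg_mul,
      zero_add, add_zero, neg_zero, hEA, hEB, hEmA, hEmB]
  exact ⟨⟨hJ, hC, hS⟩, (comm_esp_iff _).2 hF⟩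

lemma inMsp_Fsp : inMsp n (Fsp n) := by
  have hE1 : mconj (E1sp n) = E1sp n := mconj_E1
  refine ⟨?_, ?_, ?_⟩
  · rw [Fsp, Jsp, fromBlocks_transpose, fromBlocks_multiply, fromBlocks_multiply,
      fromBlocks_add]
    simp only [Matrix.mul_zero, Matrix.mul_one, Matrix.zero_mul, Matrix.one_mul,
      Matrix.mul_neg, Matrix.neg_mul, zero_add, add_zero, E1_transpose]
    simp
  · rw [Fsp, fromBlocks_transpose, mconj_fromBlocks, fromBlocks_neg, E1_transpose, hE1]
    simp
  · rw [Fsp, Ssp, fromBlocks_multiply, fromBlocks_multiply, fromBlocks_neg]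
    simp only [Matrix.mul_zero, Matrix.zero_mul, zero_add, add_zero, In1_E1_In1]
    simp [In1_E1_In1]

lemma inMsp_smul_real (r : ℝ) {X : Matrix (Pn n ⊕ Pn n) (Pn n ⊕ Pn n) ℂ}
    (h : inMsp n X) : inMsp n (r • X) := by
  obtain ⟨h1, h2, h3⟩ := h
  refine ⟨?_, ?_, ?_⟩
  · rw [Matrix.smul_mul, transpose_smul, Matrix.mul_smul, ← smul_add, h1, smul_zero]
  · rw [transpose_smul, mconj_rsmul, h2, smul_neg]
  · rw [Matrix.mul_smul, Matrix.smul_mul, h3, smul_neg]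

lemma inMsp_esp : inMsp n (esp n) := by
  have h := inMsp_Fsp (n := n)
  obtain ⟨h1, h2, h3⟩ := h
  rw [esp_eq]
  set z : ℂ := ((Real.sqrt (8 * ((n : ℝ) + 2)) : ℂ))⁻¹ with hz
  have hzr : starRingEnd ℂ z = z := by
    rw [hz, map_inv₀, Complex.conj_ofReal]
  refine ⟨?_, ?_, ?_⟩
  · rw [Matrix.smul_mul, transpose_smul, Matrix.mul_smul, ← smul_add, h1, smul_zero]
  · rw [transpose_smul, mconj_csmul, hzr, h2, smul_neg]
  · rw [Matrix.mul_smul, Matrix.smul_mul, h3, smul_neg]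

/-! ### the model space for h_parallel -/
abbrev Wsp (n : ℕ) := ℝ × ℂ × Matrix (Fin (n-1)) (Fin (n-1)) ℝ ×
  Matrix (Fin (n-1)) (Fin (n-1)) ℝ × (Fin (n-1) → ℝ)

def Pmat (N : Matrix (Fin (n-1)) (Fin (n-1)) ℝ) : Matrix (Fin (n-1)) (Fin (n-1)) ℂ :=
  of fun k l => if k < l then (N k l : ℂ) + (N l k : ℂ) * I
    else if l < k then -((N l k : ℂ)) + (N k l : ℂ) * I
    else (N k k : ℂ) * I

def Qmat (M : Matrix (Fin (n-1)) (Fin (n-1)) ℝ) (v : Fin (n-1) → ℝ) :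
    Matrix (Fin (n-1)) (Fin (n-1)) ℂ :=
  of fun k l => if k < l then (M k l : ℂ) + (M l k : ℂ) * I
    else if l < k then (M l k : ℂ) + (M k l : ℂ) * I
    else (M k k : ℂ) + (v k : ℂ) * I

lemma Pmat_skew (N : Matrix (Fin (n-1)) (Fin (n-1)) ℝ) :
    (Pmat N)ᵀ = -(mconj (Pmat N)) := by
  ext k l
  simp only [transpose_apply, Matrix.neg_apply, mconj, Matrix.map_apply, Pmat, of_apply]
  rcases lt_trichotomy k l with h | h | h
  · rw [if_pos h, if_neg (asymm h), if_pos h]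
    simp [Complex.ext_iff]
  · subst h
    simp [Complex.ext_iff]
  · rw [if_neg (asymm h), if_pos h, if_neg (asymm h), if_pos h]
    simp [Complex.ext_iff]

lemma Qmat_symm (M : Matrix (Fin (n-1)) (Fin (n-1)) ℝ) (v : Fin (n-1) → ℝ) :
    (Qmat M v)ᵀ = Qmat M v := by
  ext k l
  simp only [transpose_apply, Qmat, of_apply]
  rcases lt_trichotomy k l with h | h | h
  · rw [if_pos h, if_neg (asymm h), if_pos h]
  · subst h; rfl
  · rw [if_neg (asymm h), if_pos h, if_neg (asymm h), if_pos h]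

def scM (z : ℂ) : Matrix (Fin 1) (Fin 1) ℂ := of fun _ _ => z

def Amat (t : ℝ) (N : Matrix (Fin (n-1)) (Fin (n-1)) ℝ) : Matrix (Pn n) (Pn n) ℂ :=
  fromBlocks (scM ((t:ℂ)*I)) 0 0 (fromBlocks (scM ((t:ℂ)*I)) 0 0 (Pmat N))
def Bmat (q : ℂ) (M : Matrix (Fin (n-1)) (Fin (n-1)) ℝ) (v : Fin (n-1) → ℝ) :
    Matrix (Pn n) (Pn n) ℂ :=
  fromBlocks (scM q) 0 0 (fromBlocks (scM q) 0 0 (Qmat M v))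

@[simp] lemma Amat_00 (t N) (a b : Fin 1) :
    Amat (n := n) t N (Sum.inl a) (Sum.inl b) = (t:ℂ)*I := rfl
@[simp] lemma Amat_0r (t N) (a : Fin 1) (y : Fin 1 ⊕ Fin (n-1)) :
    Amat (n := n) t N (Sum.inl a) (Sum.inr y) = 0 := by cases y <;> rfl
@[simp] lemma Amat_r0 (t N) (x : Fin 1 ⊕ Fin (n-1)) (b : Fin 1) :
    Amat (n := n) t N (Sum.inr x) (Sum.inl b) = 0 := by cases x <;> rfl
@[simp] lemma Amat_11 (t N) (a b : Fin 1) :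
    Amat (n := n) t N (Sum.inr (Sum.inl a)) (Sum.inr (Sum.inl b)) = (t:ℂ)*I := rfl
@[simp] lemma Amat_1k (t N) (a : Fin 1) (k : Fin (n-1)) :
    Amat (n := n) t N (Sum.inr (Sum.inl a)) (Sum.inr (Sum.inr k)) = 0 := rfl
@[simp] lemma Amat_k1 (t N) (k : Fin (n-1)) (b : Fin 1) :
    Amat (n := n) t N (Sum.inr (Sum.inr k)) (Sum.inr (Sum.inl b)) = 0 := rfl
@[simp] lemma Amat_kk (t N) (k l : Fin (n-1)) :
    Amat (n := n) t N (Sum.inr (Sum.inr k)) (Sum.inr (Sum.inr l)) = Pmat N k l := rfl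

@[simp] lemma Bmat_00 (q M v) (a b : Fin 1) :
    Bmat (n := n) q M v (Sum.inl a) (Sum.inl b) = q := rfl
@[simp] lemma Bmat_0r (q M v) (a : Fin 1) (y : Fin 1 ⊕ Fin (n-1)) :
    Bmat (n := n) q M v (Sum.inl a) (Sum.inr y) = 0 := by cases y <;> rfl
@[simp] lemma Bmat_r0 (q M v) (x : Fin 1 ⊕ Fin (n-1)) (b : Fin 1) :
    Bmat (n := n) q M v (Sum.inr x) (Sum.inl b) = 0 := by cases x <;> rfl
@[simp] lemma Bmat_11 (q M v) (a b : Fin 1) :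
    Bmat (n := n) q M v (Sum.inr (Sum.inl a)) (Sum.inr (Sum.inl b)) = q := rfl
@[simp] lemma Bmat_1k (q M v) (a : Fin 1) (k : Fin (n-1)) :
    Bmat (n := n) q M v (Sum.inr (Sum.inl a)) (Sum.inr (Sum.inr k)) = 0 := rfl
@[simp] lemma Bmat_k1 (q M v) (k : Fin (n-1)) (b : Fin 1) :
    Bmat (n := n) q M v (Sum.inr (Sum.inr k)) (Sum.inr (Sum.inl b)) = 0 := rfl
@[simp] lemma Bmat_kk (q M v) (k l : Fin (n-1)) :
    Bmat (n := n) q M v (Sum.inr (Sum.inr k)) (Sum.inr (Sum.inr l)) = Qmat M v k l := rfl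

lemma Amat_skew (t : ℝ) (N : Matrix (Fin (n-1)) (Fin (n-1)) ℝ) :
    (Amat (n := n) t N)ᵀ = -(mconj (Amat t N)) := by
  ext i j
  have hP := Pmat_skew N
  rcases i with a | (b | k) <;> rcases j with a' | (b' | k') <;>
    simp [mconj, Complex.ext_iff]
  · have h := congrFun (congrFun hP k') k
    simp [mconj, Complex.ext_iff] at h
    obtain ⟨h1, h2⟩ := h
    constructor <;> linarith

lemma Bmat_symm (q : ℂ) (M : Matrix (Fin (n-1)) (Fin (n-1)) ℝ) (v : Fin (n-1) → ℝ) :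
    (Bmat (n := n) q M v)ᵀ = Bmat q M v := by
  ext i j
  have hQ := Qmat_symm M v
  rcases i with a | (b | k) <;> rcases j with a' | (b' | k') <;> simp
  · have h := congrFun (congrFun hQ k') k
    simp only [transpose_apply] at h
    exact h.symm

lemma S_Amat (t : ℝ) (N : Matrix (Fin (n-1)) (Fin (n-1)) ℝ) :
    In1 n * Amat t N * In1 n = Amat t N := by
  rw [In1, Amat, fromBlocks_multiply, fromBlocks_multiply]
  simp
lemma S_Bmat (q : ℂ) (M) (v : Fin (n-1) → ℝ) :
    In1 n * Bmat q M v * In1 n = Bmat q M v := by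
  rw [In1, Bmat, fromBlocks_multiply, fromBlocks_multiply]
  simp

lemma E1_Amat (t : ℝ) (N : Matrix (Fin (n-1)) (Fin (n-1)) ℝ) :
    Amat (n := n) t N * E1sp n = E1sp n * Amat t N := by
  ext i j
  rcases i with a | (b | k) <;> rcases j with a' | (b' | k') <;>
    simp [mulE1_c0, mulE1_c1, mulE1_ck, E1mul_r0, E1mul_r1, E1mul_rk]
lemma E1_Bmat (q : ℂ) (M) (v : Fin (n-1) → ℝ) :
    Bmat (n := n) q M v * E1sp n = E1sp n * Bmat q M v := by
  ext i j
  rcases i with a | (b | k) <;> rcases j with a' | (b' | k') <;>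
    simp [mulE1_c0, mulE1_c1, mulE1_ck, E1mul_r0, E1mul_r1, E1mul_rk]

/-- the parametrization of h_parallel -/
def PsiFun (w : Wsp n) : Matrix (Pn n ⊕ Pn n) (Pn n ⊕ Pn n) ℂ :=
  fromBlocks (Amat w.1 w.2.2.1) (Bmat w.2.1 w.2.2.2.1 w.2.2.2.2)
    (-(mconj (Bmat w.2.1 w.2.2.2.1 w.2.2.2.2))) (mconj (Amat w.1 w.2.2.1))

lemma PsiFun_mem (w : Wsp n) :
    inHsp n (PsiFun w) ∧ PsiFun w * esp n = esp n * PsiFun w :=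
  mem_h_of _ _ (Amat_skew _ _) (Bmat_symm _ _ _) (S_Amat _ _) (S_Bmat _ _ _)
    (E1_Amat _ _) (E1_Bmat _ _ _)

/-! ### linearity of the parametrization -/
lemma Pmat_add (N N' : Matrix (Fin (n-1)) (Fin (n-1)) ℝ) :
    Pmat (N + N') = Pmat N + Pmat N' := by
  ext k l
  simp only [Pmat, of_apply, Matrix.add_apply]
  split_ifs <;> push_cast <;> ring
lemma Pmat_smul (r : ℝ) (N : Matrix (Fin (n-1)) (Fin (n-1)) ℝ) :
    Pmat (r • N) = r • Pmat N := by
  ext k l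
  simp only [Pmat, of_apply, Matrix.smul_apply, smul_eq_mul, Complex.real_smul]
  split_ifs <;> push_cast <;> ring
lemma Qmat_add (M M' : Matrix (Fin (n-1)) (Fin (n-1)) ℝ) (v v' : Fin (n-1) → ℝ) :
    Qmat (M + M') (v + v') = Qmat M v + Qmat M' v' := by
  ext k l
  simp only [Qmat, of_apply, Matrix.add_apply, Pi.add_apply]
  split_ifs <;> push_cast <;> ring
lemma Qmat_smul (r : ℝ) (M : Matrix (Fin (n-1)) (Fin (n-1)) ℝ) (v : Fin (n-1) → ℝ) :
    Qmat (r • M) (r • v) = r • Qmat M v := by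
  ext k l
  simp only [Qmat, of_apply, Matrix.smul_apply, Pi.smul_apply, smul_eq_mul,
    Complex.real_smul]
  split_ifs <;> push_cast <;> ring

lemma Amat_add (t t' : ℝ) (N N' : Matrix (Fin (n-1)) (Fin (n-1)) ℝ) :
    Amat (n := n) (t + t') (N + N') = Amat t N + Amat t' N' := by
  ext i j
  rcases i with a | (b | k) <;> rcases j with a' | (b' | k') <;>
    simp [Pmat_add] <;> push_cast <;> ring
lemma Amat_smul (r t : ℝ) (N : Matrix (Fin (n-1)) (Fin (n-1)) ℝ) :
    Amat (n := n) (r * t) (r • N) = r • Amat t N := by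
  ext i j
  rcases i with a | (b | k) <;> rcases j with a' | (b' | k') <;>
    simp [Pmat_smul, Complex.real_smul] <;> push_cast <;> ring
lemma Bmat_add (q q' : ℂ) (M M') (v v' : Fin (n-1) → ℝ) :
    Bmat (n := n) (q + q') (M + M') (v + v') = Bmat q M v + Bmat q' M' v' := by
  ext i j
  rcases i with a | (b | k) <;> rcases j with a' | (b' | k') <;>
    simp [Qmat_add]
lemma Bmat_smul (r : ℝ) (q : ℂ) (M) (v : Fin (n-1) → ℝ) :
    Bmat (n := n) (r • q) (r • M) (r • v) = r • Bmat q M v := by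
  ext i j
  rcases i with a | (b | k) <;> rcases j with a' | (b' | k') <;>
    simp [Qmat_smul]

def Psi (n : ℕ) : Wsp n →ₗ[ℝ] Matrix (Pn n ⊕ Pn n) (Pn n ⊕ Pn n) ℂ where
  toFun := PsiFun
  map_add' w w' := by
    obtain ⟨t, q, N, M, v⟩ := w
    obtain ⟨t', q', N', M', v'⟩ := w'
    simp only [PsiFun, Prod.fst_add, Prod.snd_add]
    rw [Amat_add, Bmat_add, mconj_add, mconj_add, neg_add, fromBlocks_add]
  map_smul' r w := by
    obtain ⟨t, q, N, M, v⟩ := w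
    simp only [PsiFun, RingHom.id_apply, Prod.smul_fst, Prod.smul_snd, smul_eq_mul]
    rw [Amat_smul, Bmat_smul, mconj_rsmul, mconj_rsmul, ← smul_neg, ← fromBlocks_smul]

lemma Psi_injective : Function.Injective (Psi n) := by
  rw [← LinearMap.ker_eq_bot, LinearMap.ker_eq_bot']
  intro w h
  obtain ⟨t, q, N, M, v⟩ := w
  have h : PsiFun (n := n) (t, q, N, M, v) = 0 := h
  have entry : ∀ i j, PsiFun (n := n) (t, q, N, M, v) i j = 0 := by
    intro i j; rw [h]; rfl
  have ht : t = 0 := by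
    have e := entry (Sum.inl (Sum.inl 0)) (Sum.inl (Sum.inl 0))
    simp [PsiFun, fromBlocks, Complex.ext_iff] at e
    exact e
  have hq : q = 0 := by
    have e := entry (Sum.inl (Sum.inl 0)) (Sum.inr (Sum.inl 0))
    simpa [PsiFun, fromBlocks] using e
  have hN : N = 0 := by
    ext k l
    rcases lt_trichotomy k l with hkl | hkl | hkl
    · have e := entry (Sum.inl (Sum.inr (Sum.inr k))) (Sum.inl (Sum.inr (Sum.inr l)))
      simp only [PsiFun, fromBlocks, of_apply, Sum.elim_inl, Sum.elim_inr] at e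
      have e2 : Pmat N k l = 0 := e
      rw [Pmat, of_apply, if_pos hkl] at e2
      have := congrArg Complex.re e2
      simpa using this
    · subst hkl
      have e := entry (Sum.inl (Sum.inr (Sum.inr k))) (Sum.inl (Sum.inr (Sum.inr k)))
      have e2 : Pmat N k k = 0 := e
      rw [Pmat, of_apply, if_neg (lt_irrefl k), if_neg (lt_irrefl k)] at e2
      have := congrArg Complex.im e2
      simpa using this
    · have e := entry (Sum.inl (Sum.inr (Sum.inr l))) (Sum.inl (Sum.inr (Sum.inr k)))
      have e2 : Pmat N l k = 0 := e
      rw [Pmat, of_apply, if_pos hkl] at e2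
      have := congrArg Complex.im e2
      simpa using this
  have hM : M = 0 := by
    ext k l
    rcases lt_trichotomy k l with hkl | hkl | hkl
    · have e := entry (Sum.inl (Sum.inr (Sum.inr k))) (Sum.inr (Sum.inr (Sum.inr l)))
      have e2 : Qmat M v k l = 0 := e
      rw [Qmat, of_apply, if_pos hkl] at e2
      have := congrArg Complex.re e2
      simpa using this
    · subst hkl
      have e := entry (Sum.inl (Sum.inr (Sum.inr k))) (Sum.inr (Sum.inr (Sum.inr k)))
      have e2 : Qmat M v k k = 0 := e
      rw [Qmat, of_apply, if_neg (lt_irrefl k), if_neg (lt_irrefl k)] at e2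
      have := congrArg Complex.re e2
      simpa using this
    · have e := entry (Sum.inl (Sum.inr (Sum.inr l))) (Sum.inr (Sum.inr (Sum.inr k)))
      have e2 : Qmat M v l k = 0 := e
      rw [Qmat, of_apply, if_pos hkl] at e2
      have := congrArg Complex.im e2
      simpa using this
  have hv : v = 0 := by
    funext k
    have e := entry (Sum.inl (Sum.inr (Sum.inr k))) (Sum.inr (Sum.inr (Sum.inr k)))
    have e2 : Qmat M v k k = 0 := e
    rw [Qmat, of_apply, if_neg (lt_irrefl k), if_neg (lt_irrefl k)] at e2
    have := congrArg Complex.im e2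
    simpa using this
  rw [ht, hq, hN, hM, hv]
  rfl

/-! ### characterization of the centralizer of e in h -/
lemma h_char {X : Matrix (Pn n ⊕ Pn n) (Pn n ⊕ Pn n) ℂ}
    (hmem : inHsp n X) (hE : X * esp n = esp n * X) :
    ∃ w : Wsp n, X = Psi n w := by
  obtain ⟨hJ, hCconj, hS⟩ := hmem
  have hF := (comm_esp_iff X).1 hE
  have fJ : ∀ i j, (X * Jsp n) i j + (Jsp n * Xᵀ) i j = 0 := by
    intro i j
    have h0 : (X * Jsp n + Jsp n * Xᵀ) i j = 0 := by rw [hJ]; rfl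
    simpa [Matrix.add_apply] using h0
  have fC : ∀ i j, X j i = -(starRingEnd ℂ (X i j)) := by
    intro i j
    have h0 : Xᵀ i j = (-(mconj X)) i j := by rw [hCconj]
    simpa [mconj] using h0
  have fE : ∀ i j, (X * Fsp n) i j = (Fsp n * X) i j := fun i j => by rw [hF]
  have fBsym : ∀ p q : Pn n, X (Sum.inl p) (Sum.inr q) = X (Sum.inl q) (Sum.inr p) := by
    intro p q
    have h := fJ (Sum.inl p) (Sum.inl q)
    rw [mulJ_l, Jmul_l] at h
    simp only [transpose_apply] at h
    linear_combination -h
  have fD : ∀ p q : Pn n,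
      X (Sum.inr p) (Sum.inr q) = starRingEnd ℂ (X (Sum.inl p) (Sum.inl q)) := by
    intro p q
    have h := fJ (Sum.inr p) (Sum.inl q)
    rw [mulJ_l, Jmul_r] at h
    simp only [transpose_apply] at h
    have h2 : X (Sum.inr p) (Sum.inr q) = -(X (Sum.inl q) (Sum.inl p)) := by
      linear_combination -h
    rw [h2, fC (Sum.inl p) (Sum.inl q)]
    ring
  have fCblk : ∀ p q : Pn n,
      X (Sum.inr p) (Sum.inl q) = -(starRingEnd ℂ (X (Sum.inl p) (Sum.inr q))) := by
    intro p q
    rw [fC (Sum.inl q) (Sum.inr p), fBsym q p]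
  have z := entry_zero_of_SXS_eq hS
  have e1 : X (Sum.inl (Sum.inl 0)) (Sum.inl (Sum.inl 0))
      = X (Sum.inl (Sum.inr (Sum.inl 0))) (Sum.inl (Sum.inr (Sum.inl 0))) := by
    have h := fE (Sum.inl (Sum.inl 0)) (Sum.inl (Sum.inr (Sum.inl 0)))
    rwa [mulF_l1, Fmul_ll] at h
  have e2 : ∀ k, X (Sum.inl (Sum.inr (Sum.inr k))) (Sum.inl (Sum.inr (Sum.inl 0))) = 0 := by
    intro k
    have h := fE (Sum.inl (Sum.inr (Sum.inr k))) (Sum.inl (Sum.inl 0))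
    rw [mulF_ll, Fmul_lk] at h
    exact neg_eq_zero.1 h
  have e3 : ∀ k, X (Sum.inl (Sum.inr (Sum.inl 0))) (Sum.inl (Sum.inr (Sum.inr k))) = 0 := by
    intro k
    have h := fE (Sum.inl (Sum.inl 0)) (Sum.inl (Sum.inr (Sum.inr k)))
    rw [mulF_lk, Fmul_ll] at h
    exact h.symm
  have e4 : X (Sum.inl (Sum.inl 0)) (Sum.inr (Sum.inl 0))
      = X (Sum.inl (Sum.inr (Sum.inl 0))) (Sum.inr (Sum.inr (Sum.inl 0))) := by
    have h := fE (Sum.inl (Sum.inl 0)) (Sum.inr (Sum.inr (Sum.inl 0)))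
    rwa [mulF_r1, Fmul_ll] at h
  have e5 : ∀ k, X (Sum.inl (Sum.inr (Sum.inr k))) (Sum.inr (Sum.inr (Sum.inl 0))) = 0 := by
    intro k
    have h := fE (Sum.inl (Sum.inr (Sum.inr k))) (Sum.inr (Sum.inl 0))
    rw [mulF_rl, Fmul_lk] at h
    exact neg_eq_zero.1 h
  have e6 : ∀ k, X (Sum.inl (Sum.inr (Sum.inl 0))) (Sum.inr (Sum.inr (Sum.inr k))) = 0 := by
    intro k
    have h := fE (Sum.inl (Sum.inl 0)) (Sum.inr (Sum.inr (Sum.inr k)))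
    rw [mulF_rk, Fmul_ll] at h
    exact h.symm
  have hdre : ∀ p : Pn n, (X (Sum.inl p) (Sum.inl p)).re = 0 := by
    intro p
    have h := fC (Sum.inl p) (Sum.inl p)
    have := congrArg Complex.re h
    simp at this
    linarith
  set t : ℝ := (X (Sum.inl (Sum.inl 0)) (Sum.inl (Sum.inl 0))).im with htdef
  set q : ℂ := X (Sum.inl (Sum.inl 0)) (Sum.inr (Sum.inl 0)) with hqdef
  set N : Matrix (Fin (n-1)) (Fin (n-1)) ℝ := of fun k l =>
    if k < l then (X (Sum.inl (Sum.inr (Sum.inr k))) (Sum.inl (Sum.inr (Sum.inr l)))).re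
    else if l < k then (X (Sum.inl (Sum.inr (Sum.inr l))) (Sum.inl (Sum.inr (Sum.inr k)))).im
    else (X (Sum.inl (Sum.inr (Sum.inr k))) (Sum.inl (Sum.inr (Sum.inr k)))).im with hNdef
  set M : Matrix (Fin (n-1)) (Fin (n-1)) ℝ := of fun k l =>
    if k < l then (X (Sum.inl (Sum.inr (Sum.inr k))) (Sum.inr (Sum.inr (Sum.inr l)))).re
    else if l < k then (X (Sum.inl (Sum.inr (Sum.inr l))) (Sum.inr (Sum.inr (Sum.inr k)))).im
    else (X (Sum.inl (Sum.inr (Sum.inr k))) (Sum.inr (Sum.inr (Sum.inr k)))).re with hMdef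
  set v : Fin (n-1) → ℝ := fun k =>
    (X (Sum.inl (Sum.inr (Sum.inr k))) (Sum.inr (Sum.inr (Sum.inr k)))).im with hvdef
  refine ⟨(t, q, N, M, v), ?_⟩
  have hTL : ∀ p p' : Pn n, X (Sum.inl p) (Sum.inl p') = Amat t N p p' := by
    intro p p'
    rcases p with a | (b | k) <;> rcases p' with a' | (b' | k')
    · obtain rfl : a = 0 := Subsingleton.elim _ _
      obtain rfl : a' = 0 := Subsingleton.elim _ _
      rw [Amat_00]
      have hre := hdre (Sum.inl 0)
      apply Complex.ext <;> simp [hre, htdef]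
    · exact z _ _ (by simp)
    · exact z _ _ (by simp)
    · exact z _ _ (by simp)
    · obtain rfl : b = 0 := Subsingleton.elim _ _
      obtain rfl : b' = 0 := Subsingleton.elim _ _
      rw [Amat_11, ← e1]
      have hre := hdre (Sum.inl 0)
      apply Complex.ext <;> simp [hre, htdef]
    · obtain rfl : b = 0 := Subsingleton.elim _ _
      rw [Amat_1k]; exact e3 k'
    · exact z _ _ (by simp)
    · obtain rfl : b' = 0 := Subsingleton.elim _ _
      rw [Amat_k1]; exact e2 k
    · rw [Amat_kk]
      rcases lt_trichotomy k k' with hkl | hkl | hkl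
      · rw [Pmat, of_apply, if_pos hkl, hNdef]
        simp only [of_apply, if_pos hkl, if_neg (asymm hkl)]
        exact (Complex.re_add_im _).symm
      · subst hkl
        rw [Pmat, of_apply, if_neg (lt_irrefl k), if_neg (lt_irrefl k), hNdef]
        simp only [of_apply, if_neg (lt_irrefl k)]
        have hre := hdre (Sum.inr (Sum.inr k))
        apply Complex.ext <;> simp [hre]
      · rw [Pmat, of_apply, if_neg (asymm hkl), if_pos hkl, hNdef]
        simp only [of_apply, if_pos hkl, if_neg (asymm hkl)]
        rw [fC (Sum.inl (Sum.inr (Sum.inr k'))) (Sum.inl (Sum.inr (Sum.inr k)))]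
        apply Complex.ext <;> simp
  have hTR : ∀ p p' : Pn n, X (Sum.inl p) (Sum.inr p') = Bmat q M v p p' := by
    intro p p'
    rcases p with a | (b | k) <;> rcases p' with a' | (b' | k')
    · obtain rfl : a = 0 := Subsingleton.elim _ _
      obtain rfl : a' = 0 := Subsingleton.elim _ _
      rw [Bmat_00]
    · exact z _ _ (by simp)
    · exact z _ _ (by simp)
    · exact z _ _ (by simp)
    · obtain rfl : b = 0 := Subsingleton.elim _ _
      obtain rfl : b' = 0 := Subsingleton.elim _ _
      rw [Bmat_11, ← e4]
    · obtain rfl : b = 0 := Subsingleton.elim _ _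
      rw [Bmat_1k]; exact e6 k'
    · exact z _ _ (by simp)
    · obtain rfl : b' = 0 := Subsingleton.elim _ _
      rw [Bmat_k1]; exact e5 k
    · rw [Bmat_kk]
      rcases lt_trichotomy k k' with hkl | hkl | hkl
      · rw [Qmat, of_apply, if_pos hkl, hMdef]
        simp only [of_apply, if_pos hkl, if_neg (asymm hkl)]
        exact (Complex.re_add_im _).symm
      · subst hkl
        rw [Qmat, of_apply, if_neg (lt_irrefl k), if_neg (lt_irrefl k), hMdef, hvdef]
        simp only [of_apply, if_neg (lt_irrefl k)]
        exact (Complex.re_add_im _).symm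
      · rw [Qmat, of_apply, if_neg (asymm hkl), if_pos hkl, hMdef]
        simp only [of_apply, if_pos hkl, if_neg (asymm hkl)]
        rw [fBsym (Sum.inr (Sum.inr k)) (Sum.inr (Sum.inr k'))]
        exact (Complex.re_add_im _).symm
  show X = PsiFun (t, q, N, M, v)
  ext i j
  rcases i with p | p <;> rcases j with p' | p'
  · rw [hTL]; rfl
  · rw [hTR]; rfl
  · rw [fCblk, hTR]; rfl
  · rw [fD, hTL]; rfl

/-! ### characterization of the centralizer of e in m -/
lemma real_smul_mat {k l : Type*} (r : ℝ) (M : Matrix k l ℂ) :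
    r • M = ((r : ℂ)) • M := by
  ext i j; simp [Complex.real_smul]

lemma m_char {X : Matrix (Pn n ⊕ Pn n) (Pn n ⊕ Pn n) ℂ}
    (hmem : inMsp n X) (hE : X * esp n = esp n * X) :
    ∃ r : ℝ, X = r • esp n := by
  obtain ⟨hJ, hCconj, hS⟩ := hmem
  have hF := (comm_esp_iff X).1 hE
  have fJ : ∀ i j, (X * Jsp n) i j + (Jsp n * Xᵀ) i j = 0 := by
    intro i j
    have h0 : (X * Jsp n + Jsp n * Xᵀ) i j = 0 := by rw [hJ]; rfl
    simpa [Matrix.add_apply] using h0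
  have fC : ∀ i j, X j i = -(starRingEnd ℂ (X i j)) := by
    intro i j
    have h0 : Xᵀ i j = (-(mconj X)) i j := by rw [hCconj]
    simpa [mconj] using h0
  have fE : ∀ i j, (X * Fsp n) i j = (Fsp n * X) i j := fun i j => by rw [hF]
  have fBsym : ∀ p q : Pn n, X (Sum.inl p) (Sum.inr q) = X (Sum.inl q) (Sum.inr p) := by
    intro p q
    have h := fJ (Sum.inl p) (Sum.inl q)
    rw [mulJ_l, Jmul_l] at h
    simp only [transpose_apply] at h
    linear_combination -h
  have fD : ∀ p q : Pn n,
      X (Sum.inr p) (Sum.inr q) = starRingEnd ℂ (X (Sum.inl p) (Sum.inl q)) := by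
    intro p q
    have h := fJ (Sum.inr p) (Sum.inl q)
    rw [mulJ_l, Jmul_r] at h
    simp only [transpose_apply] at h
    have h2 : X (Sum.inr p) (Sum.inr q) = -(X (Sum.inl q) (Sum.inl p)) := by
      linear_combination -h
    rw [h2, fC (Sum.inl p) (Sum.inl q)]
    ring
  have fCblk : ∀ p q : Pn n,
      X (Sum.inr p) (Sum.inl q) = -(starRingEnd ℂ (X (Sum.inl p) (Sum.inr q))) := by
    intro p q
    rw [fC (Sum.inl q) (Sum.inr p), fBsym q p]
  have z := entry_zero_of_SXS_eq_neg hS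
  set a : ℂ := X (Sum.inl (Sum.inl 0)) (Sum.inl (Sum.inr (Sum.inl 0))) with hadef
  have m1 : X (Sum.inl (Sum.inr (Sum.inl 0))) (Sum.inl (Sum.inl 0)) = -a := by
    have h := fE (Sum.inl (Sum.inl 0)) (Sum.inl (Sum.inl 0))
    rw [mulF_ll, Fmul_ll] at h
    exact h.symm
  have m2 : ∀ k, X (Sum.inl (Sum.inr (Sum.inr k))) (Sum.inl (Sum.inl 0)) = 0 := by
    intro k
    have h := fE (Sum.inl (Sum.inr (Sum.inr k))) (Sum.inl (Sum.inr (Sum.inl 0)))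
    rwa [mulF_l1, Fmul_lk] at h
  have m3 : ∀ k, X (Sum.inl (Sum.inl 0)) (Sum.inl (Sum.inr (Sum.inr k))) = 0 := by
    intro k
    have h := fE (Sum.inl (Sum.inr (Sum.inl 0))) (Sum.inl (Sum.inr (Sum.inr k)))
    rw [mulF_lk, Fmul_l1] at h
    have := h.symm
    rwa [neg_eq_zero] at this
  have m4 : X (Sum.inl (Sum.inl 0)) (Sum.inr (Sum.inr (Sum.inl 0))) = 0 := by
    have h := fE (Sum.inl (Sum.inl 0)) (Sum.inr (Sum.inl 0))
    rw [mulF_rl, Fmul_ll] at h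
    rw [fBsym (Sum.inr (Sum.inl 0)) (Sum.inl 0)] at h
    linear_combination -h/2
  have m4b : X (Sum.inl (Sum.inr (Sum.inl 0))) (Sum.inr (Sum.inl 0)) = 0 := by
    rw [fBsym (Sum.inr (Sum.inl 0)) (Sum.inl 0)]
    exact m4
  have m5 : ∀ k, X (Sum.inl (Sum.inl 0)) (Sum.inr (Sum.inr (Sum.inr k))) = 0 := by
    intro k
    have h := fE (Sum.inl (Sum.inr (Sum.inl 0))) (Sum.inr (Sum.inr (Sum.inr k)))
    rw [mulF_rk, Fmul_l1] at h
    have := h.symm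
    rwa [neg_eq_zero] at this
  have m5b : ∀ k, X (Sum.inl (Sum.inr (Sum.inr k))) (Sum.inr (Sum.inl 0)) = 0 := by
    intro k
    rw [fBsym (Sum.inr (Sum.inr k)) (Sum.inl 0)]
    exact m5 k
  have areal : starRingEnd ℂ a = a := by
    have h := fC (Sum.inl (Sum.inr (Sum.inl 0))) (Sum.inl (Sum.inl 0))
    rw [m1] at h
    rw [← hadef] at h
    rw [map_neg] at h
    have : a = starRingEnd ℂ a := by linear_combination h
    exact this.symm
  have hB0 : ∀ p p' : Pn n, X (Sum.inl p) (Sum.inr p') = 0 := by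
    intro p p'
    rcases p with c | (b | k) <;> rcases p' with c' | (b' | k')
    · exact z _ _ (by simp)
    · obtain rfl : c = 0 := Subsingleton.elim _ _
      obtain rfl : b' = 0 := Subsingleton.elim _ _
      exact m4
    · obtain rfl : c = 0 := Subsingleton.elim _ _
      exact m5 k'
    · obtain rfl : c' = 0 := Subsingleton.elim _ _
      obtain rfl : b = 0 := Subsingleton.elim _ _
      exact m4b
    · exact z _ _ (by simp)
    · exact z _ _ (by simp)
    · obtain rfl : c' = 0 := Subsingleton.elim _ _
      exact m5b k
    · exact z _ _ (by simp)
    · exact z _ _ (by simp)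
  have hA : ∀ p p' : Pn n, X (Sum.inl p) (Sum.inl p') = a * E1sp n p p' := by
    intro p p'
    rcases p with c | (b | k) <;> rcases p' with c' | (b' | k')
    · rw [E1_ll, mul_zero]; exact z _ _ (by simp)
    · obtain rfl : c = 0 := Subsingleton.elim _ _
      obtain rfl : b' = 0 := Subsingleton.elim _ _
      rw [E1_l1, mul_one]
    · rw [E1_lk, mul_zero]
      obtain rfl : c = 0 := Subsingleton.elim _ _
      exact m3 k'
    · obtain rfl : c' = 0 := Subsingleton.elim _ _
      obtain rfl : b = 0 := Subsingleton.elim _ _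
      rw [E1_1l]
      rw [m1]; ring
    · rw [E1_rr, mul_zero]; exact z _ _ (by simp)
    · rw [E1_rr, mul_zero]; exact z _ _ (by simp)
    · obtain rfl : c' = 0 := Subsingleton.elim _ _
      rw [E1_kl, mul_zero]
      exact m2 k
    · rw [E1_rr, mul_zero]; exact z _ _ (by simp)
    · rw [E1_rr, mul_zero]; exact z _ _ (by simp)
  have hXF : X = (a : ℂ) • Fsp n := by
    ext i j
    rcases i with p | p <;> rcases j with p' | p'
    · rw [Matrix.smul_apply, smul_eq_mul]
      rw [show Fsp n (Sum.inl p) (Sum.inl p') = E1sp n p p' from rfl]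
      exact hA p p'
    · rw [Matrix.smul_apply, smul_eq_mul]
      rw [show Fsp n (Sum.inl p) (Sum.inr p') = 0 from by simp [Fsp, fromBlocks]]
      rw [mul_zero]
      exact hB0 p p'
    · rw [Matrix.smul_apply, smul_eq_mul]
      rw [show Fsp n (Sum.inr p) (Sum.inl p') = 0 from by simp [Fsp, fromBlocks]]
      rw [mul_zero, fCblk, hB0]
      simp
    · rw [Matrix.smul_apply, smul_eq_mul]
      rw [show Fsp n (Sum.inr p) (Sum.inr p') = E1sp n p p' from rfl]
      rw [fD, hA]
      rw [_root_.map_mul, areal]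
      congr 1
      have := congrFun (congrFun (mconj_E1 (n := n)) p) p'
      simpa [mconj] using this
  refine ⟨a.re * Real.sqrt (8 * ((n : ℝ) + 2)), ?_⟩
  have ha' : (a.re : ℂ) = a := by
    rw [Complex.conj_eq_iff_re] at areal
    exact areal
  rw [esp_eq, real_smul_mat, smul_smul, hXF]
  congr 1
  rw [← ha']
  have hs : ((Real.sqrt (8 * ((n : ℝ) + 2)) : ℂ)) ≠ 0 := by
    have : (0:ℝ) < Real.sqrt (8 * ((n : ℝ) + 2)) := Real.sqrt_pos.2 (by positivity)
    exact_mod_cast this.ne'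
  rw [Complex.ofReal_mul, mul_assoc, mul_inv_cancel₀ hs, mul_one]
  simp

end Sp

/-- the centralizer of e in m is ℝ·e, and the centralizer h_∥ of
e in h has real dimension 2(n−1)² + n + 2.  (h_∥ is a real subspace, hence
coincides with its real span.) -/
theorem stmt17 (n : ℕ) (hn : 1 ≤ n) :
    {X : Matrix (Pn n ⊕ Pn n) (Pn n ⊕ Pn n) ℂ | inMsp n X ∧ X * esp n = esp n * X}
      = {X | ∃ r : ℝ, X = r • esp n} ∧
    Module.finrank ℝ
      ↥(Submodule.span ℝ
        {Y : Matrix (Pn n ⊕ Pn n) (Pn n ⊕ Pn n) ℂ | inHsp n Y ∧ Y * esp n = esp n * Y})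
      = 2 * (n - 1) ^ 2 + n + 2 := by
  constructor
  · ext X
    simp only [Set.mem_setOf_eq]
    constructor
    · rintro ⟨hm, hE⟩
      exact Sp.m_char hm hE
    · rintro ⟨r, rfl⟩
      refine ⟨Sp.inMsp_smul_real r Sp.inMsp_esp, ?_⟩
      rw [Matrix.smul_mul, Matrix.mul_smul]
  · have hset : {Y : Matrix (Pn n ⊕ Pn n) (Pn n ⊕ Pn n) ℂ |
        inHsp n Y ∧ Y * esp n = esp n * Y} = Set.range (Sp.Psi n) := by
      ext Y
      simp only [Set.mem_setOf_eq, Set.mem_range]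
      constructor
      · rintro ⟨hm, hE⟩
        obtain ⟨w, hw⟩ := Sp.h_char hm hE
        exact ⟨w, hw.symm⟩
      · rintro ⟨w, rfl⟩
        exact Sp.PsiFun_mem w
    rw [hset, ← LinearMap.coe_range, Submodule.span_eq]
    rw [LinearMap.finrank_range_of_inj Sp.Psi_injective]
    have hW : Module.finrank ℝ (Sp.Wsp n)
        = 1 + (2 + ((n-1)*(n-1) + ((n-1)*(n-1) + (n-1)))) := by
      simp [Module.finrank_prod, Module.finrank_matrix, Module.finrank_pi,
        Complex.finrank_real_complex, Module.finrank_self]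
    rw [hW]
    obtain ⟨m, rfl⟩ : ∃ m, n = m + 1 := ⟨n - 1, by omega⟩
    simp only [Nat.add_sub_cancel]
    ring
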